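/- arXiv:1908.05921 — 2 statements merged into one kernel-verified Lean document; each statement's English description precedes it below -/
import Mathlib

section
/- If U is a nontrivial non-essential submodule of M whose degree in the proper sum-essential graph N(M) equals 1, then U is a uniform module, every nonzero submodule B ⊆ U with B a vertex of N(M) also has degree 1, and every complement of U in M is a semisimple module. -/
variable {R : Type*} [Ring R] {M : Type*} [AddCommGroup M] [Module R M]

/-- `N` is an essential submodule of `M`: it intersects every nonzero submodule nontrivially. -/
def IsEssentialSubmodule (N : Submodule R M) : Prop :=
  ∀ B : Submodule R M, B ≠ ⊥ → N ⊓ B ≠ ⊥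

/-- A vertex of the sum-essential graph `S(M)`: a nontrivial submodule. -/
def IsVertexS (N : Submodule R M) : Prop := N ≠ ⊥ ∧ N ≠ ⊤

/-- Adjacency in the sum-essential graph `S(M)`. -/
def AdjS (A B : Submodule R M) : Prop :=
  IsVertexS A ∧ IsVertexS B ∧ A ≠ B ∧ IsEssentialSubmodule (A ⊔ B)

/-- A vertex of the proper sum-essential graph `N(M)`: a nontrivial non-essential submodule. -/
def IsVertexP (N : Submodule R M) : Prop :=
  N ≠ ⊥ ∧ N ≠ ⊤ ∧ ¬ IsEssentialSubmodule N

/-- Adjacency in the proper sum-essential graph `N(M)`. -/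
def AdjP (A B : Submodule R M) : Prop :=
  IsVertexP A ∧ IsVertexP B ∧ A ≠ B ∧ IsEssentialSubmodule (A ⊔ B)

/-- `U` is a uniform submodule: nonzero, and any two nonzero submodules of it intersect. -/
def UniformSubmodule (U : Submodule R M) : Prop :=
  U ≠ ⊥ ∧ ∀ A B : Submodule R M, A ≤ U → B ≤ U → A ≠ ⊥ → B ≠ ⊥ → A ⊓ B ≠ ⊥

/-- `C` is a complement of `U` in `M`: maximal with respect to `U ⊓ C = ⊥`. -/
def IsComplementOf (C U : Submodule R M) : Prop :=
  U ⊓ C = ⊥ ∧ ∀ D : Submodule R M, U ⊓ D = ⊥ → C ≤ D → D = C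

/-!
Every complement `C` of a vertex `U` is a neighbour of `U` in `N(M)`, and so is any nonzero `X`
with `U ⊔ X` essential that meets some nonzero `A ≤ U` trivially. When `U` has degree one all
these neighbours coincide. Two disjoint nonzero `A, B ≤ U` would make `B ⊔ C` a neighbour
different from `C`, so `U` is uniform; and for `A ≤ C` and a complement `D` of `U ⊔ A`, the
neighbour `A ⊔ D` equals `C`, so `D ⊓ C` is a complement of `A` inside `C`.
-/

theorem IsEssentialSubmodule.mono {N N' : Submodule R M} (he : IsEssentialSubmodule N)
    (h : N ≤ N') : IsEssentialSubmodule N' := fun B hB hN'B =>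
  he B hB (eq_bot_iff.mpr (hN'B ▸ inf_le_inf_right B h))

theorem ne_bot_of_isEssentialSubmodule_sup {U X : Submodule R M}
    (hU : ¬ IsEssentialSubmodule U) (h : IsEssentialSubmodule (U ⊔ X)) : X ≠ ⊥ := by
  rintro rfl
  exact hU (by rwa [sup_bot_eq] at h)

theorem exists_isComplementOf (U : Submodule R M) :
    ∃ C : Submodule R M, IsComplementOf C U := by
  obtain ⟨C, -, hC, hCmax⟩ := zorn_le_nonempty₀ {D : Submodule R M | Disjoint U D}
    (fun c hc hchain _ _ => ⟨sSup c,
      (hchain.directedOn.disjoint_sSup_right).2 fun _ hD => hc hD, fun _ => le_sSup⟩)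
    ⊥ disjoint_bot_right
  exact ⟨C, disjoint_iff.1 hC,
    fun D hD hCD => le_antisymm (hCmax (disjoint_iff.2 hD) hCD) hCD⟩

theorem IsComplementOf.isEssentialSubmodule_sup {C U : Submodule R M}
    (hC : IsComplementOf C U) : IsEssentialSubmodule (U ⊔ C) := by
  intro X hX hUCX
  -- `U` stays disjoint from `C ⊔ X`, so maximality of `C` absorbs `X` into `C ≤ U ⊔ C`.
  have hdisj : Disjoint U (C ⊔ X) :=
    (disjoint_iff.2 hC.1).disjoint_sup_right_of_disjoint_sup_left (disjoint_iff.2 hUCX)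
  have hXC : X ≤ C := le_sup_right.trans (hC.2 _ (disjoint_iff.1 hdisj) le_sup_left).le
  exact hX (by rwa [inf_eq_right.2 (hXC.trans le_sup_right)] at hUCX)

theorem isVertexP_of_inf_eq_bot {A X : Submodule R M} (hA : A ≠ ⊥) (hAX : A ⊓ X = ⊥)
    (hX : X ≠ ⊥) : IsVertexP X := by
  refine ⟨hX, fun hXtop => hA ?_, fun hess => hess A hA (by rwa [inf_comm])⟩
  rwa [hXtop, inf_top_eq] at hAX

theorem adjP_of_inf_eq_bot {U A X : Submodule R M} (hU : IsVertexP U) (hAU : A ≤ U)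
    (hA : A ≠ ⊥) (hAX : A ⊓ X = ⊥) (hX : X ≠ ⊥) (hess : IsEssentialSubmodule (U ⊔ X)) :
    AdjP U X := by
  refine ⟨hU, isVertexP_of_inf_eq_bot hA hAX hX, ?_, hess⟩
  rintro rfl
  exact hA (by rwa [inf_eq_left.2 hAU] at hAX)

theorem IsComplementOf.adjP {C U : Submodule R M} (hU : IsVertexP U)
    (hC : IsComplementOf C U) : AdjP U C :=
  adjP_of_inf_eq_bot hU le_rfl hU.1 hC.1
    (ne_bot_of_isEssentialSubmodule_sup hU.2.2 hC.isEssentialSubmodule_sup)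
    hC.isEssentialSubmodule_sup

section DegreeOne

variable {U : Submodule R M} (hU : IsVertexP U) (hdeg : ∃! C, AdjP U C)
include hU hdeg

theorem uniformSubmodule_of_existsUnique_adjP : UniformSubmodule U := by
  refine ⟨hU.1, fun A B hAU hBU hA hB hAB => hB ?_⟩
  obtain ⟨C, hC⟩ := exists_isComplementOf U
  have hABC : A ⊓ (B ⊔ C) = ⊥ := disjoint_iff.1 <|
    (disjoint_iff.2 hAB).disjoint_sup_right_of_disjoint_sup_left
      ((disjoint_iff.2 hC.1).mono_left (sup_le hAU hBU))
  have hadj : AdjP U (B ⊔ C) :=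
    adjP_of_inf_eq_bot hU hAU hA hABC (fun h => hB (sup_eq_bot_iff.1 h).1)
      (hC.isEssentialSubmodule_sup.mono (sup_le_sup_left le_sup_right U))
  have hBC : B ⊔ C = C := hdeg.unique hadj (hC.adjP hU)
  exact le_bot_iff.1 (hC.1 ▸ le_inf hBU (sup_eq_right.1 hBC))

theorem existsUnique_adjP_of_le {B : Submodule R M} (hBU : B ≤ U) (hB : IsVertexP B) :
    ∃! C, AdjP B C := by
  obtain ⟨C, hC⟩ := exists_isComplementOf U
  have hCB : IsComplementOf C B := by
    refine ⟨le_bot_iff.1 (hC.1 ▸ inf_le_inf_right C hBU), fun D hBD hCD => hC.2 D ?_ hCD⟩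
    by_contra hUD
    exact (uniformSubmodule_of_existsUnique_adjP hU hdeg).2 B (U ⊓ D) hBU inf_le_left hB.1 hUD
      (le_bot_iff.1 (hBD ▸ inf_le_inf_left B inf_le_right))
  refine ⟨C, hCB.adjP hB, fun V hV => hdeg.unique ?_ (hC.adjP hU)⟩
  refine ⟨hU, hV.2.1, ?_, hV.2.2.2.mono (sup_le_sup_right hBU V)⟩
  rintro rfl
  exact hU.2.2 (by simpa [sup_eq_right.2 hBU] using hV.2.2.2)

theorem isSemisimpleModule_of_isComplementOf {C : Submodule R M} (hC : IsComplementOf C U) :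
    IsSemisimpleModule R C := by
  refine (isSemisimpleModule_iff R C).2 <| C.mapIic.complementedLattice_iff.2 <|
    Set.Iic.complementedLattice_iff.2 fun A hAC => ?_
  obtain ⟨D, hD⟩ := exists_isComplementOf (U ⊔ A)
  have hUA : Disjoint U A := (disjoint_iff.2 hC.1).mono_right hAC
  have hUAD : U ⊓ (A ⊔ D) = ⊥ :=
    disjoint_iff.1 (hUA.disjoint_sup_right_of_disjoint_sup_left (disjoint_iff.2 hD.1))
  have hess : IsEssentialSubmodule (U ⊔ (A ⊔ D)) := by
    rw [← sup_assoc]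
    exact hD.isEssentialSubmodule_sup
  have hADC : A ⊔ D = C := hdeg.unique
    (adjP_of_inf_eq_bot hU le_rfl hU.1 hUAD (ne_bot_of_isEssentialSubmodule_sup hU.2.2 hess) hess)
    (hC.adjP hU)
  refine ⟨D ⊓ C, inf_le_right, ?_, ?_⟩
  · exact le_bot_iff.1 (hD.1 ▸ inf_le_inf le_sup_right inf_le_left)
  · rw [← sup_inf_assoc_of_le D hAC, hADC, inf_idem]

end DegreeOne

/-- If a vertex `U` of `N(M)` has degree 1, then `U` is uniform,
every vertex `B ⊆ U` of `N(M)` also has degree 1, and every complement of `U`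
in `M` is a semisimple module. -/
theorem stmt11 (U : Submodule R M) (hU : IsVertexP U) (hdeg : ∃! C, AdjP U C) :
    UniformSubmodule U ∧
    (∀ B : Submodule R M, B ≤ U → IsVertexP B → ∃! C, AdjP B C) ∧
    (∀ C : Submodule R M, IsComplementOf C U → IsSemisimpleModule R ↥C) :=
  ⟨uniformSubmodule_of_existsUnique_adjP hU hdeg,
    fun _ hBU hB => existsUnique_adjP_of_le hU hdeg hBU hB,
    fun _ hC => isSemisimpleModule_of_isComplementOf hU hdeg hC⟩
end

section
/- Let M be a nonzero nonsimple module and k a natural number. The sum-essential graph S(M) is k-regular (every vertex has degree exactly k) if and only if S(M) is a complete graph on k + 1 vertices. -/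
variable {R : Type*} [Ring R] {M : Type*} [AddCommGroup M] [Module R M]

/-!
If `S(M)` is `k`-regular and some vertex `E` is adjacent to all others, then the vertex set is
`{E}` together with the `k` neighbours of `E`, and every vertex, having `k` neighbours among the
`k` other vertices, is adjacent to all of them. An essential vertex `E` is such a vertex.
Otherwise `⊤` is the only nonzero essential submodule, so `A` and `B` are adjacent iff
`A ⊔ B = ⊤`. Then no two vertices are comparable: for vertices `B < A`, the neighbourhood of `B`
lies in that of `A`, hence equals it by regularity; a Zorn complement `C` of `A` (`A ⊓ C = ⊥`,
`A ⊔ C = ⊤`) is thus adjacent to `B`, and the modular law gives `A = (B ⊔ C) ⊓ A = B`.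
So for distinct vertices `A ⊔ B` is not a vertex, i.e. `A ⊔ B = ⊤`, and `S(M)` is complete.
-/

section Lattice

variable {α : Type*} [CompleteLattice α] [IsModularLattice α] [IsCompactlyGenerated α]

theorem exists_disjoint_forall_sup_inf_ne_bot (a : α) :
    ∃ c, Disjoint a c ∧ ∀ b, b ≠ ⊥ → (a ⊔ c) ⊓ b ≠ ⊥ := by
  obtain ⟨c, -, hc⟩ := zorn_le_nonempty₀ {c | Disjoint a c}
    (fun s hs hchain _ _ =>
      ⟨sSup s, hchain.directedOn.disjoint_sSup_right.2 fun _ hb => hs hb, fun _ => le_sSup⟩)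
    ⊥ disjoint_bot_right
  refine ⟨c, hc.prop, fun b hb hsup => hb ?_⟩
  have hbc : b ≤ c :=
    le_sup_right.trans <|
      hc.2 (hc.prop.disjoint_sup_right_of_disjoint_sup_left (disjoint_iff.2 hsup)) le_sup_left
  exact (disjoint_iff.2 hsup).eq_bot_of_ge (hbc.trans le_sup_right)

end Lattice

section RegularRelation

variable {α : Type*} {r : α → α → Prop} {V : Set α} {k : ℕ} {a b : α}

def IsRegularOn (r : α → α → Prop) (V : Set α) (k : ℕ) : Prop :=
  ∀ a ∈ V, {b | r a b}.Finite ∧ {b | r a b}.ncard = k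

def IsCompleteOn (r : α → α → Prop) (V : Set α) : Prop :=
  ∀ a b, a ∈ V → b ∈ V → a ≠ b → r a b

theorem setOf_subset_sdiff_singleton (hr : ∀ a b, r a b → b ∈ V ∧ a ≠ b) (a : α) :
    {b | r a b} ⊆ V \ {a} :=
  fun b hb => ⟨(hr a b hb).1, fun h => (hr a b hb).2 (Set.mem_singleton_iff.1 h).symm⟩

theorem setOf_eq_sdiff_singleton (hr : ∀ a b, r a b → b ∈ V ∧ a ≠ b)
    (huniv : ∀ b ∈ V, a ≠ b → r a b) : {b | r a b} = V \ {a} :=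
  (setOf_subset_sdiff_singleton hr a).antisymm
    fun b ⟨hb, hne⟩ => huniv b hb fun h => hne (Set.mem_singleton_iff.2 h.symm)

theorem IsRegularOn.setOf_eq_of_subset (hreg : IsRegularOn r V k) (ha : a ∈ V) (hb : b ∈ V)
    (h : {c | r a c} ⊆ {c | r b c}) : {c | r a c} = {c | r b c} :=
  Set.eq_of_subset_of_ncard_le h (by rw [(hreg a ha).2, (hreg b hb).2]) (hreg b hb).1

theorem IsRegularOn.isCompleteOn_of_forall_rel (hr : ∀ a b, r a b → b ∈ V ∧ a ≠ b)
    (hreg : IsRegularOn r V k) (ha : a ∈ V) (huniv : ∀ b ∈ V, a ≠ b → r a b) :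
    IsCompleteOn r V ∧ V.Finite ∧ V.ncard = k + 1 := by
  have hNa := setOf_eq_sdiff_singleton hr huniv
  have hfin : V.Finite := (hNa ▸ (hreg a ha).1).of_sdiff (Set.finite_singleton a)
  have hcard : V.ncard = k + 1 := by
    rw [← Set.ncard_sdiff_singleton_add_one ha hfin, ← hNa, (hreg a ha).2]
  refine ⟨fun b c hb hc hbc => ?_, hfin, hcard⟩
  have hNb : {d | r b d} = V \ {b} :=
    Set.eq_of_subset_of_ncard_le (setOf_subset_sdiff_singleton hr b)
      (by rw [Set.ncard_sdiff_singleton_of_mem hb, hcard, (hreg b hb).2, Nat.add_sub_cancel])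
      hfin.sdiff
  exact (hNb ▸ ⟨hc, fun h => hbc (Set.mem_singleton_iff.1 h).symm⟩ : c ∈ {d | r b d})

theorem IsCompleteOn.isRegularOn (hr : ∀ a b, r a b → b ∈ V ∧ a ≠ b)
    (hcomp : IsCompleteOn r V) (hfin : V.Finite) (hcard : V.ncard = k + 1) :
    IsRegularOn r V k := fun a ha => by
  rw [setOf_eq_sdiff_singleton hr fun b hb => hcomp a b ha hb]
  exact ⟨hfin.sdiff, by rw [Set.ncard_sdiff_singleton_of_mem ha, hcard, Nat.add_sub_cancel]⟩

end RegularRelation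

section SumEssentialGraph

variable {A B N : Submodule R M} {k : ℕ}

theorem IsEssentialSubmodule.mono_s17 (hN : IsEssentialSubmodule N) (hle : N ≤ A) :
    IsEssentialSubmodule A :=
  fun B hB h => hN B hB (le_bot_iff.1 (h ▸ inf_le_inf_right B hle))

theorem isEssentialSubmodule_top : IsEssentialSubmodule (⊤ : Submodule R M) :=
  fun B hB => by rwa [top_inf_eq]

variable (hE : ∀ N : Submodule R M, IsVertexS N → ¬ IsEssentialSubmodule N)
include hE

theorem eq_top_of_isEssentialSubmodule (hN : N ≠ ⊥) (hess : IsEssentialSubmodule N) : N = ⊤ :=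
  not_not.1 fun htop => hE N ⟨hN, htop⟩ hess

theorem adjS_iff_sup_eq_top : AdjS A B ↔ IsVertexS A ∧ IsVertexS B ∧ A ≠ B ∧ A ⊔ B = ⊤ := by
  refine ⟨fun ⟨hA, hB, hAB, hess⟩ => ⟨hA, hB, hAB, ?_⟩,
    fun ⟨hA, hB, hAB, htop⟩ => ⟨hA, hB, hAB, htop ▸ isEssentialSubmodule_top⟩⟩
  exact eq_top_of_isEssentialSubmodule hE (ne_bot_of_le_ne_bot hA.1 le_sup_left) hess

theorem exists_adjS_disjoint (hA : IsVertexS A) : ∃ C, AdjS A C ∧ Disjoint A C := by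
  obtain ⟨C, hdisj, hess⟩ := exists_disjoint_forall_sup_inf_ne_bot A
  have htop : A ⊔ C = ⊤ :=
    eq_top_of_isEssentialSubmodule hE (ne_bot_of_le_ne_bot hA.1 le_sup_left) hess
  have hC : IsVertexS C := by
    refine ⟨?_, ?_⟩ <;> rintro rfl
    · exact hA.2 (by rwa [sup_bot_eq] at htop)
    · exact hA.1 (disjoint_top.1 hdisj)
  have hAC : A ≠ C := by
    rintro rfl
    exact hA.1 (disjoint_self.1 hdisj)
  exact ⟨C, (adjS_iff_sup_eq_top hE).2 ⟨hA, hC, hAC, htop⟩, hdisj⟩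

theorem not_lt_of_isRegularOn (hreg : IsRegularOn AdjS {N : Submodule R M | IsVertexS N} k)
    (hA : IsVertexS A) (hB : IsVertexS B) : ¬ B < A := by
  intro hBA
  obtain ⟨C, hAC, hdisj⟩ := exists_adjS_disjoint hE hA
  have hsub : {D | AdjS B D} ⊆ {D | AdjS A D} := fun D hBD => by
    obtain ⟨-, hD, -, htop⟩ := (adjS_iff_sup_eq_top hE).1 hBD
    refine (adjS_iff_sup_eq_top hE).2 ⟨hA, hD, ?_, top_le_iff.1 (htop ▸ sup_le_sup_right hBA.le D)⟩
    rintro rfl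
    exact hD.2 (by rwa [sup_eq_right.2 hBA.le] at htop)
  have hBC : AdjS B C := (Set.ext_iff.1 (hreg.setOf_eq_of_subset hB hA hsub) C).2 hAC
  have hBC_top : B ⊔ C = ⊤ := ((adjS_iff_sup_eq_top hE).1 hBC).2.2.2
  have hAB : A = B :=
    calc A = (B ⊔ C) ⊓ A := by rw [hBC_top, top_inf_eq]
      _ = B ⊔ C ⊓ A := sup_inf_assoc_of_le C hBA.le
      _ = B := by rw [hdisj.symm.eq_bot, sup_bot_eq]
  exact hBA.ne hAB.symm

theorem adjS_of_isRegularOn (hreg : IsRegularOn AdjS {N : Submodule R M | IsVertexS N} k)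
    (hA : IsVertexS A) (hB : IsVertexS B) (hAB : A ≠ B) : AdjS A B := by
  refine (adjS_iff_sup_eq_top hE).2 ⟨hA, hB, hAB, not_not.1 fun htop => ?_⟩
  rcases (le_sup_left : A ≤ A ⊔ B).lt_or_eq with hlt | heq
  · exact not_lt_of_isRegularOn hE hreg ⟨ne_bot_of_le_ne_bot hA.1 le_sup_left, htop⟩ hA hlt
  · exact not_lt_of_isRegularOn hE hreg hA hB ((le_sup_right.trans heq.ge).lt_of_ne hAB.symm)

end SumEssentialGraph

theorem stmt17_general
    (h2 : ∃ A B : Submodule R M, IsVertexS A ∧ IsVertexS B ∧ A ≠ B) (k : ℕ) :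
    (∀ A : Submodule R M, IsVertexS A →
        {C | AdjS A C}.Finite ∧ {C | AdjS A C}.ncard = k) ↔
      ((∀ A B : Submodule R M, IsVertexS A → IsVertexS B → A ≠ B → AdjS A B) ∧
        {N : Submodule R M | IsVertexS N}.Finite ∧
        {N : Submodule R M | IsVertexS N}.ncard = k + 1) := by
  have hr : ∀ A B : Submodule R M, AdjS A B → B ∈ {N | IsVertexS N} ∧ A ≠ B :=
    fun _ _ h => ⟨h.2.1, h.2.2.1⟩
  refine ⟨fun hreg => ?_, fun ⟨hcomp, hfin, hcard⟩ => IsCompleteOn.isRegularOn hr hcomp hfin hcard⟩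
  obtain ⟨A, hA, huniv⟩ :
      ∃ A : Submodule R M, IsVertexS A ∧ ∀ B, IsVertexS B → A ≠ B → AdjS A B := by
    by_cases hE : ∃ E : Submodule R M, IsVertexS E ∧ IsEssentialSubmodule E
    · obtain ⟨E, hE, hess⟩ := hE
      exact ⟨E, hE, fun B hB hEB => ⟨hE, hB, hEB, hess.mono_s17 le_sup_left⟩⟩
    · obtain ⟨A, -, hA, -⟩ := h2
      exact ⟨A, hA, fun B => adjS_of_isRegularOn (fun N hN hess => hE ⟨N, hN, hess⟩) hreg hA⟩
  exact IsRegularOn.isCompleteOn_of_forall_rel hr hreg hA huniv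

/-- For a nonzero nonsimple module `M` and `k : ℕ`, the graph `S(M)`
is `k`-regular iff it is a complete graph on `k + 1` vertices. -/
theorem stmt17 (hnt : Nontrivial M) (hns : ¬ IsSimpleModule R M)
    (h2 : ∃ A B : Submodule R M, IsVertexS A ∧ IsVertexS B ∧ A ≠ B) (k : ℕ) :
    (∀ A : Submodule R M, IsVertexS A →
        {C | AdjS A C}.Finite ∧ {C | AdjS A C}.ncard = k) ↔
      ((∀ A B : Submodule R M, IsVertexS A → IsVertexS B → A ≠ B → AdjS A B) ∧
        {N : Submodule R M | IsVertexS N}.Finite ∧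
        {N : Submodule R M | IsVertexS N}.ncard = k + 1) :=
  stmt17_general h2 k
end
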